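/- The kernel of the homomorphism Φ : B₃ → SL₂(ℤ) sending τ₁ ↦ [[1,1],[0,1]] and τ₂ ↦ [[1,0],[-1,1]] is the cyclic subgroup generated by the central element (τ₁τ₂)⁶; in particular Φ fits into a short exact sequence 1 → ℤ → B₃ → SL₂(ℤ) → 1. -/

import Mathlib

open Matrix

/-- The single braid relation `τ₁τ₂τ₁ = τ₂τ₁τ₂` (as relator `τ₁τ₂τ₁(τ₂τ₁τ₂)⁻¹`). -/
def braidRels : Set (FreeGroup (Fin 2)) :=
  {FreeGroup.of 0 * FreeGroup.of 1 * FreeGroup.of 0 *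
    (FreeGroup.of 1 * FreeGroup.of 0 * FreeGroup.of 1)⁻¹}

/-- The braid group on 3 strands, `B₃ = ⟨τ₁, τ₂ ∣ τ₁τ₂τ₁ = τ₂τ₁τ₂⟩`. -/
abbrev B₃ := PresentedGroup braidRels

/-- The generators `τ₁ = τ 0` and `τ₂ = τ 1` of `B₃`. -/
def τ (i : Fin 2) : B₃ := PresentedGroup.of i

/-- `U₁ = [[1,1],[0,1]]` as an element of `SL₂(ℤ)`. -/
def U₁ : Matrix.SpecialLinearGroup (Fin 2) ℤ :=
  ⟨!![1, 1; 0, 1], by norm_num [Matrix.det_fin_two_of]⟩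

/-- `U₂ = [[1,0],[-1,1]]` as an element of `SL₂(ℤ)`. -/
def U₂ : Matrix.SpecialLinearGroup (Fin 2) ℤ :=
  ⟨!![1, 0; -1, 1], by norm_num [Matrix.det_fin_two_of]⟩

/-- The images of the generators. -/
def Ufun : Fin 2 → Matrix.SpecialLinearGroup (Fin 2) ℤ := ![U₁, U₂]

lemma braid_rel_holds : U₁ * U₂ * U₁ = U₂ * U₁ * U₂ := by
  apply Subtype.ext
  simp only [Matrix.SpecialLinearGroup.coe_mul]
  simp [U₁, U₂, Matrix.SpecialLinearGroup.coe_mul, Matrix.mul_fin_two]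

lemma Ufun_lifts : ∀ r ∈ braidRels, FreeGroup.lift Ufun r = 1 := by
  rintro r hr
  rw [braidRels, Set.mem_singleton_iff] at hr
  subst hr
  rw [_root_.map_mul, _root_.map_inv, _root_.map_mul, _root_.map_mul, _root_.map_mul, mul_inv_eq_one]
  simpa [Ufun] using braid_rel_holds

/-- The homomorphism `Φ : B₃ → SL₂(ℤ)`, `τ₁ ↦ U₁`, `τ₂ ↦ U₂`. -/
def Φ : B₃ →* Matrix.SpecialLinearGroup (Fin 2) ℤ :=
  PresentedGroup.toGroup Ufun_lifts

section Gen
open ModularGroup Matrix.SpecialLinearGroup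

abbrev SL2Z := Matrix.SpecialLinearGroup (Fin 2) ℤ

lemma U1_eq_T : U₁ = ModularGroup.T := by
  apply Subtype.ext; simp [U₁, ModularGroup.coe_T]

lemma U1U2 : (U₁ * U₂ : SL2Z).1 = !![0, 1; -1, 1] := by
  simp only [Matrix.SpecialLinearGroup.coe_mul]
  simp [U₁, U₂, Matrix.SpecialLinearGroup.coe_mul, Matrix.mul_fin_two]

lemma U1U2_cube : (U₁ * U₂ : SL2Z) ^ 3 = -1 := by
  apply Subtype.ext
  rw [pow_succ, pow_succ, pow_one]
  simp only [Matrix.SpecialLinearGroup.coe_mul, U1U2]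
  norm_num [Matrix.mul_fin_two]
  decide

lemma neg_one_mem : (-1 : SL2Z) ∈ Subgroup.closure {U₁, U₂} := by
  rw [← U1U2_cube]
  exact pow_mem (mul_mem (Subgroup.subset_closure (by simp)) (Subgroup.subset_closure (by simp))) 3

lemma S_eq : (ModularGroup.S : SL2Z) = -1 * (U₁ * U₂ * U₁) := by
  apply Subtype.ext
  simp only [Matrix.SpecialLinearGroup.coe_mul, U1U2]
  norm_num [U₁, ModularGroup.coe_S, Matrix.mul_fin_two]
  decide

lemma S_mem : (ModularGroup.S : SL2Z) ∈ Subgroup.closure {U₁, U₂} := by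
  rw [S_eq]
  have h1 : U₁ ∈ Subgroup.closure {U₁, U₂} := Subgroup.subset_closure (by simp)
  have h2 : U₂ ∈ Subgroup.closure {U₁, U₂} := Subgroup.subset_closure (by simp)
  exact mul_mem neg_one_mem (mul_mem (mul_mem h1 h2) h1)

lemma T_zpow_mem (n : ℤ) : (ModularGroup.T ^ n : SL2Z) ∈ Subgroup.closure {U₁, U₂} := by
  rw [← U1_eq_T]
  exact zpow_mem (Subgroup.subset_closure (by simp)) n

end Gen
section Gen2
open ModularGroup

lemma natAbs_emod_lt' (a c : ℤ) (hc : c ≠ 0) : (a % c).natAbs < c.natAbs := by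
  have h1 : 0 ≤ a % c := Int.emod_nonneg a hc
  have h2 : a % |c| < |c| := Int.emod_lt_of_pos a (abs_pos.mpr hc)
  rw [Int.emod_abs] at h2
  have h3 : |c| = (c.natAbs : ℤ) := Int.abs_eq_natAbs c
  omega

lemma mem_closure_of_c_aux : ∀ n : ℕ, ∀ g : Matrix.SpecialLinearGroup (Fin 2) ℤ,
    (g.1 1 0).natAbs = n → g ∈ Subgroup.closure {U₁, U₂} := by
  intro n
  induction n using Nat.strong_induction_on with
  | _ n ih =>
    intro g hg
    by_cases hc : g.1 1 0 = 0
    · -- upper triangular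
      have hdet : g.1 0 0 * g.1 1 1 = 1 := by
        have := g.2
        rw [Matrix.det_fin_two] at this
        rw [hc] at this; linarith
      rcases Int.mul_eq_one_iff_eq_one_or_neg_one.mp hdet with ⟨h1, h2⟩ | ⟨h1, h2⟩
      · have : g = ModularGroup.T ^ (g.1 0 1) := by
          apply Subtype.ext
          rw [ModularGroup.coe_T_zpow]
          ext i j; fin_cases i <;> fin_cases j <;> simp [hc, h1, h2]
        rw [this]; exact T_zpow_mem _
      · have : g = -1 * ModularGroup.T ^ (-(g.1 0 1)) := by
          apply Subtype.ext
          rw [Matrix.SpecialLinearGroup.coe_mul, ModularGroup.coe_T_zpow]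
          ext i j; fin_cases i <;> fin_cases j <;> simp [hc, h1, h2]
        rw [this]
        exact mul_mem neg_one_mem (T_zpow_mem _)
    · set a := g.1 0 0 with ha
      set c := g.1 1 0 with hcdef
      set m : ℤ := -(a / c) with hm
      have key : ((ModularGroup.S * (ModularGroup.T ^ m * g)).1 1 0).natAbs < n := by
        have e1 : (ModularGroup.T ^ m * g).1 0 0 = a + m * c := by
          rw [Matrix.SpecialLinearGroup.coe_mul, ModularGroup.coe_T_zpow]
          simp [Matrix.mul_apply, Fin.sum_univ_two]
          rfl
        have e2 : (ModularGroup.S * (ModularGroup.T ^ m * g)).1 1 0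
            = (ModularGroup.T ^ m * g).1 0 0 := by
          rw [Matrix.SpecialLinearGroup.coe_mul, ModularGroup.coe_S]
          simp [Matrix.mul_apply, Fin.sum_univ_two]
        rw [e2, e1, hm]
        have : a + -(a / c) * c = a % c := by rw [Int.emod_def]; ring
        rw [this, ← hg]
        exact natAbs_emod_lt' a c hc
      have hmem := ih _ key _ rfl
      have : g = (ModularGroup.T ^ m)⁻¹ * (ModularGroup.S⁻¹ *
          (ModularGroup.S * (ModularGroup.T ^ m * g))) := by group
      rw [this]
      exact mul_mem (inv_mem (T_zpow_mem m)) (mul_mem (inv_mem S_mem) hmem)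

end Gen2
section Braid

lemma braid_relation : τ 0 * τ 1 * τ 0 = τ 1 * τ 0 * τ 1 := by
  have h : PresentedGroup.mk braidRels (FreeGroup.of 0 * FreeGroup.of 1 * FreeGroup.of 0 *
      (FreeGroup.of 1 * FreeGroup.of 0 * FreeGroup.of 1)⁻¹) = 1 := by
    apply (QuotientGroup.eq_one_iff _).mpr
    exact Subgroup.subset_normalClosure (by simp [braidRels])
  rw [_root_.map_mul, _root_.map_inv, _root_.map_mul, _root_.map_mul, _root_.map_mul, mul_inv_eq_one] at h
  exact h

/-- `Δ = τ₀τ₁τ₀`. -/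
noncomputable def Δ : B₃ := τ 0 * τ 1 * τ 0

lemma delta_a : Δ * τ 0 = τ 1 * Δ := by
  symm
  calc τ 1 * Δ = (τ 1 * τ 0 * τ 1) * τ 0 := by rw [Δ]; group
  _ = (τ 0 * τ 1 * τ 0) * τ 0 := by rw [← braid_relation]
  _ = Δ * τ 0 := by rw [Δ]

lemma delta_b : Δ * τ 1 = τ 0 * Δ := by
  calc Δ * τ 1 = τ 0 * (τ 1 * τ 0 * τ 1) := by rw [Δ]; group
  _ = τ 0 * (τ 0 * τ 1 * τ 0) := by rw [← braid_relation]
  _ = τ 0 * Δ := by rw [Δ]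

lemma c3_eq : (τ 0 * τ 1) ^ 3 = Δ * Δ := by
  calc (τ 0 * τ 1) ^ 3 = (τ 0 * τ 1 * τ 0) * (τ 1 * τ 0 * τ 1) := by
        rw [pow_succ, pow_succ, pow_one]; group
  _ = (τ 0 * τ 1 * τ 0) * (τ 0 * τ 1 * τ 0) := by rw [← braid_relation]
  _ = Δ * Δ := rfl

lemma delta_sq_comm (g : B₃) : g * (Δ * Δ) = (Δ * Δ) * g := by
  have key : ∀ i : Fin 2, (Δ * Δ) * τ i = τ i * (Δ * Δ) := by
    intro i
    fin_cases i
    · calc Δ * Δ * τ 0 = Δ * (Δ * τ 0) := by group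
      _ = Δ * (τ 1 * Δ) := by rw [delta_a]
      _ = (Δ * τ 1) * Δ := by group
      _ = (τ 0 * Δ) * Δ := by rw [delta_b]
      _ = τ 0 * (Δ * Δ) := by group
    · calc Δ * Δ * τ 1 = Δ * (Δ * τ 1) := by group
      _ = Δ * (τ 0 * Δ) := by rw [delta_b]
      _ = (Δ * τ 0) * Δ := by group
      _ = (τ 1 * Δ) * Δ := by rw [delta_a]
      _ = τ 1 * (Δ * Δ) := by group
  have : g ∈ Subgroup.centralizer {Δ * Δ} := by
    apply PresentedGroup.generated_by
    intro j
    rw [Subgroup.mem_centralizer_iff]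
    intro h hh
    rw [Set.mem_singleton_iff] at hh
    subst hh
    exact key j
  exact (Subgroup.mem_centralizer_iff.mp this _ (Set.mem_singleton _)).symm

lemma c3_central : (τ 0 * τ 1) ^ 3 ∈ Subgroup.center B₃ := by
  rw [Subgroup.mem_center_iff]
  intro g
  rw [c3_eq]
  exact delta_sq_comm g

lemma c6_central : (τ 0 * τ 1) ^ 6 ∈ Subgroup.center B₃ := by
  have : (6 : ℕ) = 3 * 2 := rfl
  rw [this, pow_mul]
  exact pow_mem c3_central 2

end Braid
section Chi

/-- Exponent-sum homomorphism `B₃ →* Multiplicative ℤ`. -/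
noncomputable def χ : B₃ →* Multiplicative ℤ :=
  PresentedGroup.toGroup (f := fun _ : Fin 2 => Multiplicative.ofAdd (1 : ℤ)) (by
    rintro r hr
    rw [braidRels, Set.mem_singleton_iff] at hr
    subst hr
    simp only [_root_.map_mul, _root_.map_inv, FreeGroup.lift_apply_of, _root_.mul_inv_rev]
    group)

lemma chi_c6 : χ ((τ 0 * τ 1) ^ 6) = Multiplicative.ofAdd (12 : ℤ) := by
  rw [map_pow, _root_.map_mul]
  show (χ (PresentedGroup.of 0) * χ (PresentedGroup.of 1)) ^ 6 = _
  rw [χ, PresentedGroup.toGroup.of, PresentedGroup.toGroup.of]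
  rw [← ofAdd_add, ← ofAdd_nsmul]
  norm_num

lemma c6_inj : Function.Injective (fun n : ℤ => ((τ 0 * τ 1) ^ 6) ^ n) := by
  intro m n h
  simp only at h
  have := congrArg χ h
  rw [map_zpow, map_zpow, chi_c6, ← ofAdd_zsmul, ← ofAdd_zsmul] at this
  have h2 := Multiplicative.ofAdd.injective this
  simp only [smul_eq_mul] at h2
  omega

/-- Cyclic lift: a homomorphism from `Multiplicative (ZMod n)` out of an element of order dividing `n`. -/
noncomputable def cycLift {G : Type*} [Group G] (n : ℕ) (x : G) (h : x ^ (n : ℤ) = 1) :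
    Multiplicative (ZMod n) →* G :=
  AddMonoidHom.toMultiplicativeLeft
    (ZMod.lift n ⟨zmultiplesHom (Additive G) (Additive.ofMul x), by
      show ((n : ℤ) • Additive.ofMul x) = 0
      rw [← ofMul_zpow, h]; rfl⟩)

lemma cycLift_apply {G : Type*} [Group G] (n : ℕ) (x : G) (h : x ^ (n : ℤ) = 1) (k : ℤ) :
    cycLift n x h (Multiplicative.ofAdd ((k : ℤ) : ZMod n)) = x ^ k := by
  simp only [cycLift, AddMonoidHom.coe_toMultiplicativeLeft, Function.comp_apply, toAdd_ofAdd,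
    ZMod.lift_coe, zmultiplesHom_apply, ← ofMul_zpow, toMul_ofMul]

end Chi
section FreeProd
open Monoid UpperHalfPlane

noncomputable section

abbrev HH : Fin 2 → Type := fun i => Multiplicative (ZMod (i.val + 2))

def sG : CoprodI HH := CoprodI.of (Multiplicative.ofAdd (1 : ZMod 2) : HH 0)
def tG : CoprodI HH := CoprodI.of (Multiplicative.ofAdd (1 : ZMod 3) : HH 1)

lemma sG_sq : sG * sG = 1 := by
  have h : (Multiplicative.ofAdd (1 : ZMod 2) * Multiplicative.ofAdd (1 : ZMod 2) :
      HH 0) = 1 := by decide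
  rw [sG, ← _root_.map_mul]
  exact (congrArg (⇑(CoprodI.of (M := HH))) h).trans (_root_.map_one _)

lemma tG_cube : tG * tG * tG = 1 := by
  have h : (Multiplicative.ofAdd (1 : ZMod 3) * Multiplicative.ofAdd (1 : ZMod 3) *
      Multiplicative.ofAdd (1 : ZMod 3) : HH 1) = 1 := by decide
  rw [tG, ← _root_.map_mul, ← _root_.map_mul]
  exact (congrArg (⇑(CoprodI.of (M := HH))) h).trans (_root_.map_one _)

def θfun : Fin 2 → CoprodI HH := ![tG * sG, sG * tG]

lemma word1 : tG * sG * (sG * tG) * (tG * sG) = sG := by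
  calc tG * sG * (sG * tG) * (tG * sG) = tG * (sG * sG) * (tG * (tG * sG)) := by group
  _ = tG * (tG * (tG * sG)) := by rw [sG_sq, mul_one]
  _ = (tG * tG * tG) * sG := by group
  _ = sG := by rw [tG_cube, one_mul]

lemma word2 : sG * tG * (tG * sG) * (sG * tG) = sG := by
  calc sG * tG * (tG * sG) * (sG * tG) = sG * (tG * tG) * (sG * sG) * tG := by group
  _ = sG * (tG * tG) * tG := by rw [sG_sq, mul_one]
  _ = sG * (tG * tG * tG) := by group
  _ = sG := by rw [tG_cube, mul_one]

lemma θ_lifts : ∀ r ∈ braidRels, FreeGroup.lift θfun r = 1 := by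
  rintro r hr
  rw [braidRels, Set.mem_singleton_iff] at hr
  subst hr
  rw [_root_.map_mul, _root_.map_inv, mul_inv_eq_one]
  simp only [_root_.map_mul, FreeGroup.lift_apply_of, θfun, Matrix.cons_val_zero, Matrix.cons_val_one,
    Matrix.head_cons]
  rw [word1, word2]

/-- The homomorphism `B₃ → C₂ * C₃`. -/
def θB : B₃ →* CoprodI HH := PresentedGroup.toGroup θ_lifts

lemma θB_0 : θB (τ 0) = tG * sG := by
  rw [τ, θB, PresentedGroup.toGroup.of]; simp [θfun]

lemma θB_1 : θB (τ 1) = sG * tG := by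
  rw [τ, θB, PresentedGroup.toGroup.of]; simp [θfun]

/-- The permutation representation of `SL(2,ℤ)` on the upper half plane. -/
abbrev P : Matrix.SpecialLinearGroup (Fin 2) ℤ →* Equiv.Perm ℍ :=
  MulAction.toPermHom (Matrix.SpecialLinearGroup (Fin 2) ℤ) ℍ

lemma P_apply (g : Matrix.SpecialLinearGroup (Fin 2) ℤ) (z : ℍ) : P g z = g • z := rfl

lemma P_neg (g : Matrix.SpecialLinearGroup (Fin 2) ℤ) : P (-g) = P g := by
  ext z : 1
  exact ModularGroup.SL_neg_smul g z

lemma S_mul_S : ModularGroup.S * ModularGroup.S = -1 := by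
  apply Subtype.ext
  rw [Matrix.SpecialLinearGroup.coe_mul, ModularGroup.coe_S]
  ext i j
  fin_cases i <;> fin_cases j <;> simp [Matrix.mul_fin_two]

/-- `t = TS = [[1,-1],[1,0]]`. -/
def tSL : Matrix.SpecialLinearGroup (Fin 2) ℤ := ModularGroup.T * ModularGroup.S

lemma coe_tSL : (tSL : Matrix (Fin 2) (Fin 2) ℤ) = !![1, -1; 1, 0] := by
  rw [tSL, Matrix.SpecialLinearGroup.coe_mul, ModularGroup.coe_T, ModularGroup.coe_S]
  norm_num [Matrix.mul_fin_two]

lemma coe_tSL_sq : ((tSL * tSL : Matrix.SpecialLinearGroup (Fin 2) ℤ) :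
    Matrix (Fin 2) (Fin 2) ℤ) = !![0, -1; 1, -1] := by
  rw [Matrix.SpecialLinearGroup.coe_mul, coe_tSL]
  norm_num [Matrix.mul_fin_two]

lemma tSL_cube : tSL * tSL * tSL = -1 := by
  apply Subtype.ext
  rw [Matrix.SpecialLinearGroup.coe_mul, coe_tSL_sq, coe_tSL]
  ext i j
  fin_cases i <;> fin_cases j <;> simp [Matrix.mul_fin_two]

lemma hS2 : (P ModularGroup.S) ^ ((2 : ℕ) : ℤ) = 1 := by
  have : ((2 : ℕ) : ℤ) = 2 := rfl
  rw [this, zpow_two, ← _root_.map_mul, S_mul_S, show (-1 : Matrix.SpecialLinearGroup (Fin 2) ℤ) = -(1) from rfl, P_neg, _root_.map_one]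

lemma ht3 : (P tSL) ^ ((3 : ℕ) : ℤ) = 1 := by
  have : ((3 : ℕ) : ℤ) = 3 := rfl
  rw [this, show (3:ℤ) = 2 + 1 from rfl, _root_.zpow_add, zpow_two, zpow_one, ← _root_.map_mul,
    ← _root_.map_mul, tSL_cube, show (-1 : Matrix.SpecialLinearGroup (Fin 2) ℤ) = -(1) from rfl,
    P_neg, _root_.map_one]

def fPerm : (i : Fin 2) → HH i →* Equiv.Perm ℍ
  | ⟨0, _⟩ => cycLift 2 (P ModularGroup.S) hS2
  | ⟨1, _⟩ => cycLift 3 (P tSL) ht3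

/-- `π : C₂ * C₃ → Perm ℍ`. -/
def πG : CoprodI HH →* Equiv.Perm ℍ := CoprodI.lift fPerm

lemma πG_sG : πG sG = P ModularGroup.S := by
  rw [πG, sG, CoprodI.lift_of]
  show cycLift 2 (P ModularGroup.S) hS2 (Multiplicative.ofAdd (1 : ZMod 2)) = P ModularGroup.S
  have h1 : (Multiplicative.ofAdd (1 : ZMod 2)) =
      Multiplicative.ofAdd (((1 : ℤ) : ZMod 2)) := by decide
  rw [h1]
  exact (cycLift_apply 2 _ hS2 1).trans (zpow_one _)

lemma πG_tG : πG tG = P tSL := by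
  rw [πG, tG, CoprodI.lift_of]
  show cycLift 3 (P tSL) ht3 (Multiplicative.ofAdd (1 : ZMod 3)) = P tSL
  have h1 : (Multiplicative.ofAdd (1 : ZMod 3)) =
      Multiplicative.ofAdd (((1 : ℤ) : ZMod 3)) := by decide
  rw [h1]
  exact (cycLift_apply 3 _ ht3 1).trans (zpow_one _)

end
end FreeProd
section PingPong
open Monoid UpperHalfPlane Pointwise

noncomputable section

/-- Ping-pong sets: negative / positive real part. -/
def XX : Fin 2 → Set ℍ := ![{z : ℍ | z.re < 0}, {z : ℍ | 0 < z.re}]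

lemma XX_nonempty : ∀ i, (XX i).Nonempty := by
  intro i
  fin_cases i
  · exact ⟨⟨⟨-1, 1⟩, show (0:ℝ) < 1 by norm_num⟩, show (-1:ℝ) < 0 by norm_num⟩
  · exact ⟨⟨⟨1, 1⟩, show (0:ℝ) < 1 by norm_num⟩, show (0:ℝ) < 1 by norm_num⟩

lemma XX_disj_key : Disjoint (XX 0) (XX 1) := by
  rw [Set.disjoint_left]
  rintro z h1 h2
  simp only [XX, Matrix.cons_val_zero, Matrix.cons_val_one, Matrix.head_cons,
    Set.mem_setOf_eq] at h1 h2
  linarith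

lemma XX_disj : Pairwise (Function.onFun Disjoint XX) := by
  intro i j hij
  fin_cases i <;> fin_cases j
  · exact absurd rfl hij
  · exact XX_disj_key
  · exact XX_disj_key.symm
  · exact absurd rfl hij

lemma coe_smul_eq (g : Matrix.SpecialLinearGroup (Fin 2) ℤ) (z : ℍ) :
    ((g • z : ℍ) : ℂ) = (((g.1 0 0 : ℝ) : ℂ) * z + ((g.1 0 1 : ℝ) : ℂ)) /
      (((g.1 1 0 : ℝ) : ℂ) * z + ((g.1 1 1 : ℝ) : ℂ)) := by
  rw [UpperHalfPlane.specialLinearGroup_apply]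
  simp [eq_intCast]

lemma S_smul_re_neg {z : ℍ} (hz : 0 < z.re) : (ModularGroup.S • z).re < 0 := by
  have h : ((ModularGroup.S • z : ℍ) : ℂ) = -1 / z := by
    rw [coe_smul_eq, ModularGroup.coe_S]
    norm_num
  have hre : (ModularGroup.S • z).re = ((-1 : ℂ) / (z : ℂ)).re := by
    rw [← UpperHalfPlane.coe_re, h]
  rw [hre, Complex.div_re, ← add_div]
  rw [← UpperHalfPlane.coe_re] at hz
  have hn : 0 < Complex.normSq (z : ℂ) := z.normSq_pos
  apply div_neg_of_neg_of_pos
  · simp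
    nlinarith [UpperHalfPlane.coe_re z, UpperHalfPlane.coe_im z, z.im_pos]
  · exact hn

lemma t_smul_re_pos {z : ℍ} (hz : z.re < 0) : 0 < (tSL • z).re := by
  have h : ((tSL • z : ℍ) : ℂ) = ((z : ℂ) - 1) / z := by
    rw [coe_smul_eq, coe_tSL]
    norm_num
    ring
  have hre : (tSL • z).re = (((z : ℂ) - 1) / (z : ℂ)).re := by
    rw [← UpperHalfPlane.coe_re, h]
  rw [hre, Complex.div_re, ← add_div]
  rw [← UpperHalfPlane.coe_re] at hz
  have hn : 0 < Complex.normSq (z : ℂ) := z.normSq_pos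
  have him : (z : ℂ).im ≠ 0 := z.im_ne_zero
  apply div_pos
  · simp [Complex.sub_re, Complex.sub_im]
    nlinarith [UpperHalfPlane.coe_re z, UpperHalfPlane.coe_im z, z.im_pos]
  · exact hn

lemma t2_smul_re_pos {z : ℍ} (hz : z.re < 0) : 0 < (tSL • (tSL • z)).re := by
  rw [← mul_smul]
  have h : (((tSL * tSL) • z : ℍ) : ℂ) = -1 / ((z : ℂ) - 1) := by
    rw [coe_smul_eq, coe_tSL_sq]
    norm_num
    ring
  have hre : ((tSL * tSL) • z).re = ((-1 : ℂ) / ((z : ℂ) - 1)).re := by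
    rw [← UpperHalfPlane.coe_re, h]
  rw [hre, Complex.div_re, ← add_div]
  rw [← UpperHalfPlane.coe_re] at hz
  have hzne : ((z : ℂ) - 1) ≠ 0 := by
    intro hh
    have := congrArg Complex.im hh
    simp at this
    exact z.im_ne_zero this
  have hn : 0 < Complex.normSq ((z : ℂ) - 1) := Complex.normSq_pos.mpr hzne
  apply div_pos
  · simp [Complex.sub_re, Complex.sub_im]
    nlinarith [UpperHalfPlane.coe_re z, UpperHalfPlane.coe_im z, z.im_pos]
  · exact hn

lemma pp01 : ∀ h : HH 0, h ≠ 1 → fPerm 0 h • XX 1 ⊆ XX 0 := by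
  intro h hne
  have hfp : fPerm 0 h = P ModularGroup.S := by
    have hh : h = Multiplicative.ofAdd (((1 : ℤ) : ZMod 2)) := by
      revert hne; revert h; decide
    subst hh
    exact (cycLift_apply 2 _ hS2 1).trans (zpow_one _)
  rw [hfp]
  rintro w hw
  rcases Set.mem_smul_set.mp hw with ⟨z, hz, rfl⟩
  have hz' : 0 < z.re := hz
  show (ModularGroup.S • z).re < 0
  exact S_smul_re_neg hz'

lemma pp10 : ∀ h : HH 1, h ≠ 1 → fPerm 1 h • XX 0 ⊆ XX 1 := by
  intro h hne
  have hfp : fPerm 1 h = P tSL ∨ fPerm 1 h = P tSL * P tSL := by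
    have hh : h = Multiplicative.ofAdd (((1 : ℤ) : ZMod 3)) ∨
        h = Multiplicative.ofAdd (((2 : ℤ) : ZMod 3)) := by
      revert hne; revert h; decide
    rcases hh with rfl | rfl
    · exact Or.inl ((cycLift_apply 3 _ ht3 1).trans (zpow_one _))
    · refine Or.inr ((cycLift_apply 3 _ ht3 2).trans ?_)
      rw [zpow_two]
  rcases hfp with hfp | hfp <;> rw [hfp] <;> rintro w hw <;>
    rcases Set.mem_smul_set.mp hw with ⟨z, hz, rfl⟩ <;> have hz' : z.re < 0 := hz
  · show 0 < (tSL • z).re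
    exact t_smul_re_pos hz'
  · show 0 < (tSL • (tSL • z)).re
    exact t2_smul_re_pos hz'

lemma XX_pp : Pairwise fun i j => ∀ h : HH i, h ≠ 1 → fPerm i h • XX j ⊆ XX i := by
  intro i j hij
  fin_cases i <;> fin_cases j
  · exact absurd rfl hij
  · exact pp01
  · exact pp10
  · exact absurd rfl hij

lemma πG_inj : Function.Injective πG := by
  apply CoprodI.lift_injective_of_ping_pong fPerm _ XX XX_nonempty XX_disj XX_pp
  right
  exact ⟨1, by rw [Cardinal.mk_fintype]; simp⟩

end
end PingPong
section Rho
open Monoid UpperHalfPlane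

noncomputable section

instance c3_normal : (Subgroup.zpowers ((τ 0 * τ 1) ^ 3)).Normal := by
  constructor
  intro n hn g
  rcases Subgroup.mem_zpowers_iff.mp hn with ⟨k, rfl⟩
  have hc : Commute g ((τ 0 * τ 1) ^ 3) := (Subgroup.mem_center_iff.mp c3_central g)
  have := (hc.zpow_right k).eq
  rw [show g * ((τ 0 * τ 1) ^ 3) ^ k * g⁻¹ = ((τ 0 * τ 1) ^ 3) ^ k from by
    rw [this]; group]
  exact Subgroup.zpow_mem _ (Subgroup.mem_zpowers _) k

/-- The quotient `B₃ / ⟨(τ₀τ₁)³⟩`. -/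
abbrev Q₃ := B₃ ⧸ Subgroup.zpowers ((τ 0 * τ 1) ^ 3)

abbrev qB : B₃ →* Q₃ := QuotientGroup.mk' _

lemma qB_delta_sq : (qB Δ) ^ ((2 : ℕ) : ℤ) = 1 := by
  have h2 : ((2 : ℕ) : ℤ) = 2 := rfl
  rw [h2, zpow_two, ← _root_.map_mul, ← c3_eq]
  exact (QuotientGroup.eq_one_iff _).mpr (Subgroup.mem_zpowers _)

lemma qB_ab_inv_cube : (qB (τ 0 * τ 1)⁻¹) ^ ((3 : ℕ) : ℤ) = 1 := by
  have h3 : ((3 : ℕ) : ℤ) = (3 : ℕ) := rfl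
  rw [h3, zpow_natCast, ← _root_.map_pow, inv_pow]
  exact (QuotientGroup.eq_one_iff _).mpr (Subgroup.inv_mem _ (Subgroup.mem_zpowers _))

def fQ : (i : Fin 2) → HH i →* Q₃
  | ⟨0, _⟩ => cycLift 2 (qB Δ) qB_delta_sq
  | ⟨1, _⟩ => cycLift 3 (qB (τ 0 * τ 1)⁻¹) qB_ab_inv_cube

/-- `ρ : C₂ * C₃ → B₃/⟨(τ₀τ₁)³⟩`. -/
def ρG : CoprodI HH →* Q₃ := CoprodI.lift fQ

lemma ρG_sG : ρG sG = qB Δ := by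
  rw [ρG, sG, CoprodI.lift_of]
  show cycLift 2 (qB Δ) qB_delta_sq (Multiplicative.ofAdd (1 : ZMod 2)) = qB Δ
  have h1 : (Multiplicative.ofAdd (1 : ZMod 2)) =
      Multiplicative.ofAdd (((1 : ℤ) : ZMod 2)) := by decide
  rw [h1]
  exact (cycLift_apply 2 _ qB_delta_sq 1).trans (zpow_one _)

lemma ρG_tG : ρG tG = qB (τ 0 * τ 1)⁻¹ := by
  rw [ρG, tG, CoprodI.lift_of]
  show cycLift 3 (qB (τ 0 * τ 1)⁻¹) qB_ab_inv_cube (Multiplicative.ofAdd (1 : ZMod 3)) =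
    qB (τ 0 * τ 1)⁻¹
  have h1 : (Multiplicative.ofAdd (1 : ZMod 3)) =
      Multiplicative.ofAdd (((1 : ℤ) : ZMod 3)) := by decide
  rw [h1]
  exact (cycLift_apply 3 _ qB_ab_inv_cube 1).trans (zpow_one _)

lemma ρG_θB : ρG.comp θB = qB := by
  apply PresentedGroup.ext
  intro x
  fin_cases x
  · show ρG (θB (τ 0)) = qB (τ 0)
    rw [θB_0, _root_.map_mul, ρG_sG, ρG_tG, ← _root_.map_mul]
    congr 1
    rw [Δ]
    group
  · show ρG (θB (τ 1)) = qB (τ 1)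
    rw [θB_1, _root_.map_mul, ρG_sG, ρG_tG, ← _root_.map_mul]
    have : Δ * (τ 0 * τ 1)⁻¹ = τ 1 := by
      rw [Δ, braid_relation]
      group
    rw [this]

lemma ker_θB : ∀ g : B₃, θB g = 1 → g ∈ Subgroup.zpowers ((τ 0 * τ 1) ^ 3) := by
  intro g hg
  have h1 : qB g = 1 := by
    have h2 : ρG (θB g) = qB g := DFunLike.congr_fun ρG_θB g
    rw [hg, _root_.map_one] at h2
    exact h2.symm
  exact (QuotientGroup.eq_one_iff _).mp h1

end
end Rho
section Final
open Monoid UpperHalfPlane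

lemma Φ_τ0 : Φ (τ 0) = U₁ := by
  rw [τ, Φ, PresentedGroup.toGroup.of]; simp [Ufun]

lemma Φ_τ1 : Φ (τ 1) = U₂ := by
  rw [τ, Φ, PresentedGroup.toGroup.of]; simp [Ufun]

lemma tSL_S : tSL * ModularGroup.S = -U₁ := by
  apply Subtype.ext
  rw [Matrix.SpecialLinearGroup.coe_mul, coe_tSL, ModularGroup.coe_S,
    Matrix.SpecialLinearGroup.coe_neg]
  norm_num [U₁, Matrix.mul_fin_two]

lemma S_tSL : ModularGroup.S * tSL = -U₂ := by
  apply Subtype.ext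
  rw [Matrix.SpecialLinearGroup.coe_mul, coe_tSL, ModularGroup.coe_S,
    Matrix.SpecialLinearGroup.coe_neg]
  norm_num [U₂, Matrix.mul_fin_two]

lemma square : P.comp Φ = πG.comp θB := by
  apply PresentedGroup.ext
  intro x
  fin_cases x
  · show P (Φ (τ 0)) = πG (θB (τ 0))
    rw [Φ_τ0, θB_0, _root_.map_mul, πG_tG, πG_sG, ← _root_.map_mul, tSL_S, P_neg]
  · show P (Φ (τ 1)) = πG (θB (τ 1))
    rw [Φ_τ1, θB_1, _root_.map_mul, πG_sG, πG_tG, ← _root_.map_mul, S_tSL, P_neg]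

lemma Φ_c3 : Φ ((τ 0 * τ 1) ^ 3) = -1 := by
  rw [map_pow, _root_.map_mul, Φ_τ0, Φ_τ1, U1U2_cube]

lemma neg_one_ne_one : (-1 : Matrix.SpecialLinearGroup (Fin 2) ℤ) ≠ 1 := by
  intro h
  have h2 := congrArg (fun g : Matrix.SpecialLinearGroup (Fin 2) ℤ =>
    (g : Matrix (Fin 2) (Fin 2) ℤ) 0 0) h
  simp only [Matrix.SpecialLinearGroup.coe_neg, Matrix.SpecialLinearGroup.coe_one,
    Matrix.neg_apply, Matrix.one_apply_eq] at h2
  norm_num at h2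

lemma c6_eq : ((τ 0 * τ 1) ^ 6) = ((τ 0 * τ 1) ^ 3) ^ 2 := by
  rw [← pow_mul]

lemma ker_eq : Φ.ker = Subgroup.zpowers ((τ 0 * τ 1) ^ 6) := by
  apply le_antisymm
  · intro g hg
    have hΦ : Φ g = 1 := hg
    have hπθ : πG (θB g) = P (Φ g) := (DFunLike.congr_fun square g).symm
    rw [hΦ, _root_.map_one] at hπθ
    have hθ : θB g = 1 := πG_inj (by rw [hπθ, _root_.map_one])
    rcases Subgroup.mem_zpowers_iff.mp (ker_θB g hθ) with ⟨k, hk⟩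
    have hΦk : ((-1 : Matrix.SpecialLinearGroup (Fin 2) ℤ)) ^ k = 1 := by
      rw [← Φ_c3, ← map_zpow, hk, hΦ]
    rcases Int.even_or_odd k with ⟨m, hm⟩ | ⟨m, hm⟩
    · refine Subgroup.mem_zpowers_iff.mpr ⟨m, ?_⟩
      rw [c6_eq, ← zpow_natCast ((τ 0 * τ 1) ^ 3) 2, ← _root_.zpow_mul]
      rw [← hk]
      congr 1
      push_cast
      omega
    · exfalso
      have e1 : ((-1 : Matrix.SpecialLinearGroup (Fin 2) ℤ)) ^ (2 : ℤ) = 1 := by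
        rw [zpow_two]
        exact (neg_mul_neg 1 1).trans (one_mul 1)
      have h2 : ((-1 : Matrix.SpecialLinearGroup (Fin 2) ℤ)) ^ k = -1 := by
        rw [hm, _root_.zpow_add, _root_.zpow_mul, e1, _root_.one_zpow, one_mul, zpow_one]
      exact neg_one_ne_one (h2.symm.trans hΦk)
  · rw [Subgroup.zpowers_le]
    have : Φ ((τ 0 * τ 1) ^ 6) = 1 := by
      rw [c6_eq, map_pow, Φ_c3, neg_one_sq]
    exact this

lemma Φ_surj : Function.Surjective Φ := by
  have hle : Subgroup.closure {U₁, U₂} ≤ Φ.range := by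
    rw [Subgroup.closure_le]
    rintro u hu
    rcases hu with rfl | rfl
    · exact ⟨τ 0, Φ_τ0⟩
    · exact ⟨τ 1, Φ_τ1⟩
  intro x
  exact hle (mem_closure_of_c_aux _ x rfl)

end Final

/-- The kernel of `Φ : B₃ → SL₂(ℤ)` is the cyclic subgroup generated by the central
element `(τ₁τ₂)⁶`, which generates a copy of `ℤ`; together with surjectivity of `Φ`,
this exhibits the short exact sequence `1 → ℤ → B₃ → SL₂(ℤ) → 1`. -/
theorem Phi_kernel_ses :
    Φ.ker = Subgroup.zpowers ((τ 0 * τ 1) ^ 6) ∧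
    (τ 0 * τ 1) ^ 6 ∈ Subgroup.center B₃ ∧
    Function.Injective (fun n : ℤ => ((τ 0 * τ 1) ^ 6) ^ n) ∧
    Function.Surjective Φ :=
  ⟨ker_eq, c6_central, c6_inj, Φ_surj⟩
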